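/- arXiv:2507.13220 — 2 statements merged into one kernel-verified Lean document; each statement's English description precedes it below -/
import Mathlib

section
/- Let φ: ℝⁿ → ℂ be measurable and let ψ(x) = sup_{|y| ≥ |x|} |φ(y)| be its least decreasing radial majorant, assumed integrable with ∫ ψ = A < ∞. Set φ_t(x) = t^{−n} φ(x/t). Then for every locally integrable f ≥ 0 and every t > 0, (φ_t * f)(x) ≤ A · Mf(x) for a.e. x, where Mf is the Hardy–Littlewood maximal function. -/
open MeasureTheory Real
open scoped ENNReal

/-- The centered Hardy–Littlewood maximal function
`Mf(x) = sup_{r>0} |B(x,r)|⁻¹ ∫_{B(x,r)} |f|`, valued in `ℝ≥0∞`. -/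
noncomputable def hlMaximal {n : ℕ} (f : EuclideanSpace ℝ (Fin n) → ℝ)
    (x : EuclideanSpace ℝ (Fin n)) : ℝ≥0∞ :=
  ⨆ (r : ℝ) (_ : 0 < r),
    (volume (Metric.ball x r))⁻¹ * ∫⁻ y in Metric.ball x r, ENNReal.ofReal |f y|

/-!
Write `ψ` as the layer-cake integral of the indicators of its superlevel sets `{ψ > s}`.
Since `ψ` is radial and decreasing, each of them coincides up to a null set with a ball
`B(0, R_s)`, so after rescaling by `t` and translating to `x` the mass that `|f|` puts on it is at
most `t^n |{ψ > s}| · Mf(x)`. Integrating in `s` gives `t^n (∫ ψ) Mf(x)`, and the factor `t^{-n}`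
of `φ_t` cancels the `t^n`.
-/

open Metric Set Module

section Radial

variable {E : Type*} [NormedAddCommGroup E] [NormedSpace ℝ E]

theorem preimage_inv_smul_sub_ball (x : E) {t : ℝ} (ht : 0 < t) (R : ℝ) :
    (fun y => t⁻¹ • (x - y)) ⁻¹' ball 0 R = ball x (t * R) := by
  ext y
  simp only [mem_preimage, mem_ball, dist_eq_norm, sub_zero, norm_smul, norm_inv,
    Real.norm_of_nonneg ht.le, norm_sub_rev y x, inv_mul_lt_iff₀ ht]

variable [MeasurableSpace E] [BorelSpace E] [FiniteDimensional ℝ E] (μ : Measure E)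
  [μ.IsAddHaarMeasure]

theorem exists_ae_eq_ball_zero_of_norm_le_mem {S : Set E}
    (hS : ∀ z ∈ S, ∀ w, ‖w‖ ≤ ‖z‖ → w ∈ S) (hμS : μ S ≠ ∞) :
    ∃ R, S =ᵐ[μ] ball (0 : E) R := by
  rcases S.eq_empty_or_nonempty with rfl | hSne
  · exact ⟨0, by simp⟩
  rcases subsingleton_or_nontrivial E with _ | _
  · obtain ⟨z, hz⟩ := hSne
    have hS_univ : S = univ := eq_univ_of_forall fun w => Subsingleton.elim z w ▸ hz
    have hball_univ : ball (0 : E) 1 = univ :=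
      eq_univ_of_forall fun w => by simp [Subsingleton.elim w 0]
    exact ⟨1, Filter.EventuallyEq.of_eq (hS_univ.trans hball_univ.symm)⟩
  have hbdd : BddAbove (norm '' S) := by
    by_contra hunbdd
    refine hμS (Eq.trans (congrArg μ (eq_univ_of_forall fun w => ?_))
      (measure_univ_of_isAddLeftInvariant μ))
    obtain ⟨_, ⟨z, hz, rfl⟩, hlt⟩ := not_bddAbove_iff.1 hunbdd ‖w‖
    exact hS z hz w hlt.le
  set R := sSup (norm '' S)
  have hS_closedBall : S ⊆ closedBall 0 R := fun z hz =>
    mem_closedBall_zero_iff.2 (le_csSup hbdd ⟨z, hz, rfl⟩)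
  have hball_S : ball 0 R ⊆ S := fun w hw => by
    obtain ⟨_, ⟨z, hz, rfl⟩, hlt⟩ := exists_lt_of_lt_csSup (hSne.image _) (mem_ball_zero_iff.1 hw)
    exact hS z hz w hlt.le
  refine ⟨R, ae_eq_set.2 ⟨measure_mono_null ?_ (Measure.addHaar_sphere μ 0 R), by
    rw [sdiff_eq_empty.2 hball_S, measure_empty]⟩⟩
  rw [← closedBall_sdiff_ball]
  exact sdiff_subset_sdiff_left hS_closedBall

theorem quasiMeasurePreserving_inv_smul_sub (x : E) {t : ℝ} (ht : 0 < t) :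
    Measure.QuasiMeasurePreserving (fun y => t⁻¹ • (x - y)) μ μ :=
  (Measure.quasiMeasurePreserving_smul μ (inv_ne_zero ht.ne')).comp
    (quasiMeasurePreserving_sub_left μ x)

variable {g : E → ℝ≥0∞} {x : E} {M : ℝ≥0∞}

theorem setLIntegral_preimage_inv_smul_sub_le
    (hM : ∀ r, ∫⁻ y in ball x r, g y ∂μ ≤ μ (ball x r) * M) {t : ℝ} (ht : 0 < t)
    {S : Set E} (hS : ∀ z ∈ S, ∀ w, ‖w‖ ≤ ‖z‖ → w ∈ S) (hμS : μ S ≠ ∞) :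
    ∫⁻ y in (fun y => t⁻¹ • (x - y)) ⁻¹' S, g y ∂μ
      ≤ ENNReal.ofReal (t ^ finrank ℝ E) * μ S * M := by
  obtain ⟨R, hSR⟩ := exists_ae_eq_ball_zero_of_norm_le_mem μ hS hμS
  rw [setLIntegral_congr ((quasiMeasurePreserving_inv_smul_sub μ x ht).preimage_ae_eq hSR),
    preimage_inv_smul_sub_ball x ht, measure_congr hSR, ← Measure.addHaar_ball_mul_of_pos μ x ht]
  exact hM (t * R)

theorem lintegral_ofReal_comp_inv_smul_sub_mul_le {ψ : E → ℝ} (hψint : Integrable ψ μ)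
    (hψ0 : ∀ z, 0 ≤ ψ z) (hψ : ∀ a b : E, ‖a‖ ≤ ‖b‖ → ψ b ≤ ψ a) (hg : AEMeasurable g μ)
    (hM : ∀ r, ∫⁻ y in ball x r, g y ∂μ ≤ μ (ball x r) * M) {t : ℝ} (ht : 0 < t) :
    ∫⁻ y, ENNReal.ofReal (ψ (t⁻¹ • (x - y))) * g y ∂μ
      ≤ ENNReal.ofReal (t ^ finrank ℝ E) * ENNReal.ofReal (∫ z, ψ z ∂μ) * M := by
  set ν := μ.withDensity g
  have hψT : AEMeasurable (fun y => ψ (t⁻¹ • (x - y))) μ :=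
    hψint.aemeasurable.comp_quasiMeasurePreserving (quasiMeasurePreserving_inv_smul_sub μ x ht)
  have hlevel : Measurable fun s : ℝ => μ {z | s < ψ z} :=
    Antitone.measurable fun _ _ hab => measure_mono fun _ hz => lt_of_le_of_lt hab hz
  calc ∫⁻ y, ENNReal.ofReal (ψ (t⁻¹ • (x - y))) * g y ∂μ
      = ∫⁻ y, ENNReal.ofReal (ψ (t⁻¹ • (x - y))) ∂ν := by
        rw [lintegral_withDensity_eq_lintegral_mul₀ hg hψT.ennreal_ofReal]
        simp only [Pi.mul_apply, mul_comm]
    _ = ∫⁻ s in Ioi 0, ν {y | s < ψ (t⁻¹ • (x - y))} :=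
        lintegral_eq_lintegral_meas_lt ν (ae_of_all _ fun _ => hψ0 _)
          (hψT.mono_ac (withDensity_absolutelyContinuous μ g))
    _ ≤ ∫⁻ s in Ioi 0, ENNReal.ofReal (t ^ finrank ℝ E) * M * μ {z | s < ψ z} := by
        refine setLIntegral_mono' measurableSet_Ioi fun s hs => ?_
        rw [withDensity_apply', mul_right_comm]
        exact setLIntegral_preimage_inv_smul_sub_le μ hM ht
          (fun z hz w hw => lt_of_lt_of_le hz (hψ w z hw)) (hψint.measure_gt_lt_top hs).ne
    _ = ENNReal.ofReal (t ^ finrank ℝ E) * ENNReal.ofReal (∫ z, ψ z ∂μ) * M := by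
        rw [lintegral_const_mul _ hlevel, ofReal_integral_eq_lintegral_ofReal hψint
          (ae_of_all _ hψ0), lintegral_eq_lintegral_meas_lt μ (ae_of_all _ hψ0)
          hψint.aemeasurable, mul_right_comm]

end Radial

theorem setLIntegral_ball_le_mul_hlMaximal {n : ℕ} (f : EuclideanSpace ℝ (Fin n) → ℝ)
    (x : EuclideanSpace ℝ (Fin n)) (r : ℝ) :
    ∫⁻ y in ball x r, ENNReal.ofReal |f y| ≤ volume (ball x r) * hlMaximal f x := by
  rcases le_or_gt r 0 with hr | hr
  · simp [ball_eq_empty.2 hr]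
  calc ∫⁻ y in ball x r, ENNReal.ofReal |f y|
      = volume (ball x r) * ((volume (ball x r))⁻¹ * ∫⁻ y in ball x r, ENNReal.ofReal |f y|) := by
        rw [← mul_assoc, ENNReal.mul_inv_cancel (measure_ball_pos _ _ hr).ne'
          measure_ball_lt_top.ne, one_mul]
    _ ≤ volume (ball x r) * hlMaximal f x := by
        gcongr
        exact le_iSup₂ (f := fun (r : ℝ) (_ : 0 < r) =>
          (volume (ball x r))⁻¹ * ∫⁻ y in ball x r, ENNReal.ofReal |f y|) r hr

theorem ofReal_norm_integral_mul_le {α : Type*} [MeasurableSpace α] {μ : Measure α} {c : ℝ}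
    (hc : 0 ≤ c) {u : α → ℂ} {v w : α → ℝ} (huv : ∀ a, ‖u a‖ ≤ v a) :
    ENNReal.ofReal ‖∫ a, (c : ℂ) * u a * (w a : ℂ) ∂μ‖
      ≤ ENNReal.ofReal c * ∫⁻ a, ENNReal.ofReal (v a) * ENNReal.ofReal |w a| ∂μ := by
  rw [← lintegral_const_mul' _ _ ENNReal.ofReal_ne_top, ofReal_norm]
  refine (enorm_integral_le_lintegral_enorm _).trans (lintegral_mono fun a => ?_)
  rw [← ofReal_norm, norm_mul, norm_mul, Complex.norm_real, Complex.norm_real,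
    Real.norm_of_nonneg hc, Real.norm_eq_abs, ENNReal.ofReal_mul (by positivity),
    ENNReal.ofReal_mul hc, mul_assoc]
  gcongr
  exact huv a

theorem stmt3_general (n : ℕ) (φ : EuclideanSpace ℝ (Fin n) → ℂ)
    (ψ : EuclideanSpace ℝ (Fin n) → ℝ)
    -- `ψ(x) = sup_{|y| ≥ |x|} |φ(y)|` is the least decreasing radial majorant of `φ`
    (hψ : ∀ x, IsLUB {s : ℝ | ∃ y, ‖x‖ ≤ ‖y‖ ∧ s = ‖φ y‖} (ψ x))
    (hψint : Integrable ψ)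
    (f : EuclideanSpace ℝ (Fin n) → ℝ)
    (hfloc : LocallyIntegrable f) (t : ℝ) (ht : 0 < t) :
    ∀ᵐ x : EuclideanSpace ℝ (Fin n), ENNReal.ofReal
        ‖∫ y, ((t ^ n : ℝ)⁻¹ : ℂ) * φ (t⁻¹ • (x - y)) * (f y : ℂ)‖
      ≤ ENNReal.ofReal (∫ y, ψ y) * hlMaximal f x := by
  have hφψ : ∀ z, ‖φ z‖ ≤ ψ z := fun z => (hψ z).1 ⟨z, le_rfl, rfl⟩
  have hψ_anti : ∀ a b : EuclideanSpace ℝ (Fin n), ‖a‖ ≤ ‖b‖ → ψ b ≤ ψ a := fun a b hab =>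
    (hψ b).2 fun _ ⟨y, hy, hs⟩ => (hψ a).1 ⟨y, hab.trans hy, hs⟩
  have hf : AEMeasurable (fun y => ENNReal.ofReal |f y|) :=
    hfloc.aestronglyMeasurable.aemeasurable.abs.ennreal_ofReal
  have htn : 0 < t ^ n := pow_pos ht n
  refine ae_of_all _ fun x => ?_
  have hconv := lintegral_ofReal_comp_inv_smul_sub_mul_le volume hψint
    (fun z => (norm_nonneg _).trans (hφψ z)) hψ_anti hf
    (setLIntegral_ball_le_mul_hlMaximal f x) ht
  rw [finrank_euclideanSpace_fin] at hconv
  calc ENNReal.ofReal ‖∫ y, ((t ^ n : ℝ)⁻¹ : ℂ) * φ (t⁻¹ • (x - y)) * (f y : ℂ)‖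
      ≤ ENNReal.ofReal (t ^ n)⁻¹ *
          ∫⁻ y, ENNReal.ofReal (ψ (t⁻¹ • (x - y))) * ENNReal.ofReal |f y| := by
        exact_mod_cast ofReal_norm_integral_mul_le (inv_nonneg.2 htn.le) fun y => hφψ _
    _ ≤ ENNReal.ofReal (t ^ n)⁻¹ *
          (ENNReal.ofReal (t ^ n) * ENNReal.ofReal (∫ y, ψ y) * hlMaximal f x) := by
        gcongr
    _ = ENNReal.ofReal (∫ y, ψ y) * hlMaximal f x := by
        rw [← mul_assoc, ← mul_assoc, ← ENNReal.ofReal_mul (inv_nonneg.2 htn.le),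
          inv_mul_cancel₀ htn.ne', ENNReal.ofReal_one, one_mul]

theorem stmt3 (n : ℕ) (φ : EuclideanSpace ℝ (Fin n) → ℂ) (hφ : Measurable φ)
    (ψ : EuclideanSpace ℝ (Fin n) → ℝ)
    -- `ψ(x) = sup_{|y| ≥ |x|} |φ(y)|` is the least decreasing radial majorant of `φ`
    (hψ : ∀ x, IsLUB {s : ℝ | ∃ y, ‖x‖ ≤ ‖y‖ ∧ s = ‖φ y‖} (ψ x))
    (hψint : Integrable ψ)
    (f : EuclideanSpace ℝ (Fin n) → ℝ) (hf0 : ∀ x, 0 ≤ f x)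
    (hfloc : LocallyIntegrable f) (t : ℝ) (ht : 0 < t) :
    ∀ᵐ x : EuclideanSpace ℝ (Fin n), ENNReal.ofReal
        ‖∫ y, ((t ^ n : ℝ)⁻¹ : ℂ) * φ (t⁻¹ • (x - y)) * (f y : ℂ)‖
      ≤ ENNReal.ofReal (∫ y, ψ y) * hlMaximal f x :=
  stmt3_general n φ ψ hψ hψint f hfloc t ht
end

section
/- With s = tanh t ∈ (0,1), the Hermite heat kernel satisfies the lower bound h_t^H(x,y) ≥ e^{−(9s/4)|x|²} ((1−s²)/(1+9s²))^{n/2} h_{s/(1+9s²)}(x − y) for all x, y ∈ ℝⁿ, where h_τ denotes the Euclidean heat kernel. -/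
/-!
Since `x + y = 2x - (x - y)`, `‖x + y‖² ≤ (2‖x‖ + ‖x - y‖)² ≤ 9‖x‖² + 9‖x - y‖²`. Hence the
Gaussian factor of the Hermite kernel is at least `e^{-9s‖x‖²/4} e^{-(1 + 9s²)‖x - y‖²/(4s)}`, whose
second factor is the Gaussian of the Euclidean heat kernel at time `s/(1 + 9s²)`; the prefactors
then match exactly.
-/

open MeasureTheory Real

/-- The Euclidean heat kernel `h_τ(z) = (4πτ)^{-n/2} e^{-|z|²/(4τ)}`. -/
noncomputable def heatKernel (n : ℕ) (τ : ℝ) (z : EuclideanSpace ℝ (Fin n)) : ℝ :=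
  (4 * π * τ) ^ (-(n : ℝ) / 2) * Real.exp (-‖z‖ ^ 2 / (4 * τ))

/-- The Hermite heat kernel in Meda's parametrization `s = tanh t`. -/
noncomputable def hermiteHeatKernelMeda (n : ℕ) (s : ℝ)
    (x y : EuclideanSpace ℝ (Fin n)) : ℝ :=
  ((1 - s ^ 2) / (4 * π * s)) ^ ((n : ℝ) / 2) *
    Real.exp (-(1 / 4) * (s * ‖x + y‖ ^ 2 + ‖x - y‖ ^ 2 / s))

theorem Real.tanh_pos {t : ℝ} (ht : 0 < t) : 0 < tanh t := by
  rw [tanh_eq_sinh_div_cosh]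
  exact div_pos (sinh_pos_iff.mpr ht) (cosh_pos t)

theorem norm_add_sq_le_nine_mul {E : Type*} [SeminormedAddCommGroup E] (x y : E) :
    ‖x + y‖ ^ 2 ≤ 9 * ‖x‖ ^ 2 + 9 * ‖x - y‖ ^ 2 := by
  have htri : ‖x + y‖ ≤ 2 * ‖x‖ + ‖x - y‖ :=
    calc ‖x + y‖ = ‖x + x - (x - y)‖ := by abel_nf
      _ ≤ ‖x‖ + ‖x‖ + ‖x - y‖ := (norm_sub_le _ _).trans (by gcongr; exact norm_add_le _ _)
      _ = 2 * ‖x‖ + ‖x - y‖ := by ring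
  have := pow_le_pow_left₀ (norm_nonneg _) htri 2
  nlinarith [sq_nonneg (‖x‖ - 2 * ‖x - y‖)]

theorem hermite_exponent_le {s a b c : ℝ} (hs : 0 < s) (hc : c ^ 2 ≤ 9 * a ^ 2 + 9 * b ^ 2) :
    -(9 * s / 4) * a ^ 2 + -b ^ 2 / (4 * (s / (1 + 9 * s ^ 2)))
      ≤ -(1 / 4) * (s * c ^ 2 + b ^ 2 / s) := by
  have hdiff : -(1 / 4) * (s * c ^ 2 + b ^ 2 / s)
      - (-(9 * s / 4) * a ^ 2 + -b ^ 2 / (4 * (s / (1 + 9 * s ^ 2))))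
      = s / 4 * (9 * a ^ 2 + 9 * b ^ 2 - c ^ 2) := by
    field_simp
    ring
  nlinarith [mul_nonneg (by positivity : 0 ≤ s / 4) (sub_nonneg.mpr hc)]

theorem Real.div_rpow_mul_div_rpow_neg {a b c : ℝ} (ha : 0 ≤ a) (hb : 0 < b) (hc : 0 < c)
    (r : ℝ) : (a / c) ^ r * (b / c) ^ (-r) = (a / b) ^ r := by
  rw [rpow_neg (div_pos hb hc).le, div_rpow ha hc.le, div_rpow hb.le hc.le,
    div_rpow ha hb.le]
  have : 0 < c ^ r := rpow_pos_of_pos hc r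
  field_simp

theorem stmt12 (n : ℕ) (t : ℝ) (ht : 0 < t) (s : ℝ) (hs : s = Real.tanh t)
    (x y : EuclideanSpace ℝ (Fin n)) :
    Real.exp (-(9 * s / 4) * ‖x‖ ^ 2) * ((1 - s ^ 2) / (1 + 9 * s ^ 2)) ^ ((n : ℝ) / 2) *
        heatKernel n (s / (1 + 9 * s ^ 2)) (x - y)
      ≤ hermiteHeatKernelMeda n s x y := by
  have hs0 : 0 < s := hs ▸ tanh_pos ht
  have hs1 : 0 < 1 - s ^ 2 := sub_pos.mpr (hs ▸ tanh_sq_lt_one t)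
  have hprefactor : ((1 - s ^ 2) / (1 + 9 * s ^ 2)) ^ ((n : ℝ) / 2) *
      (4 * π * (s / (1 + 9 * s ^ 2))) ^ (-(n : ℝ) / 2)
      = ((1 - s ^ 2) / (4 * π * s)) ^ ((n : ℝ) / 2) := by
    rw [← mul_div_assoc, neg_div]
    exact div_rpow_mul_div_rpow_neg hs1.le (by positivity) (by positivity) _
  have hexp := exp_le_exp.mpr <|
    hermite_exponent_le hs0 (norm_add_sq_le_nine_mul x y)
  rw [exp_add] at hexp
  unfold heatKernel hermiteHeatKernelMeda
  calc _ = (((1 - s ^ 2) / (1 + 9 * s ^ 2)) ^ ((n : ℝ) / 2) *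
          (4 * π * (s / (1 + 9 * s ^ 2))) ^ (-(n : ℝ) / 2)) *
        (exp (-(9 * s / 4) * ‖x‖ ^ 2) * exp (-‖x - y‖ ^ 2 / (4 * (s / (1 + 9 * s ^ 2))))) := by
        ring
    _ ≤ _ := by
      rw [hprefactor]
      exact mul_le_mul_of_nonneg_left hexp (by positivity)
end
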